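/- Let {u_k}_{k=0}^{N−1} be an input sequence, x_0 ∈ ℝ^n an initial state, and {x_k} the resulting state sequence. For n ≤ k ≤ N−L, define Φ_k ∈ ℝ^{(n+m)×(n+1)} as the matrix with columns (x_{k−n}; u_{k−n}), …, (x_k; u_k), and U_k ∈ ℝ^{m(L−1)×(n+1)} as the matrix with (i,j)-block u_{k−n+1+i+j} for i = 0,…,L−2 and j = 0,…,n. Then the stacked matrix [Φ_k; U_k] satisfies [Φ_k; U_k] d = Z̃ u_{[k−n,k+L−1]}. -/

import Mathlib

open Matrix Finset

noncomputable def stateSeq {n m : ℕ} (A : Matrix (Fin n) (Fin n) ℝ) (B : Matrix (Fin n) (Fin m) ℝ)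
    (x0 : Fin n → ℝ) (u : ℕ → Fin m → ℝ) : ℕ → Fin n → ℝ
  | 0 => x0
  | k + 1 => A.mulVec (stateSeq A B x0 u k) + B.mulVec (u k)

/-- Markov parameters `Γ̃_j` of the extended system with output `φ_k = (x_k; u_k)`:
`Γ̃_0 = D̃ = [0; I_m]` and `Γ̃_j = C̃ A^(j-1) B = [A^(j-1) B; 0]` for `j ≥ 1`. -/
noncomputable def MarkovT {n m : ℕ} (A : Matrix (Fin n) (Fin n) ℝ) (B : Matrix (Fin n) (Fin m) ℝ) :
    ℕ → Matrix (Fin n ⊕ Fin m) (Fin m) ℝ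
  | 0 => Matrix.of (Sum.elim (fun _ _ => (0 : ℝ)) (fun i l => if i = l then 1 else 0))
  | j + 1 => Matrix.of (Sum.elim (fun i l => (A ^ j * B) i l) (fun _ _ => 0))

/-- `M̃ = [M̃_n ⋯ M̃_1 M̃_0]` with `M̃_j = ∑_{q=0}^j d_{j-q} Γ̃_q`. -/
noncomputable def Mtil {n m : ℕ} (A : Matrix (Fin n) (Fin n) ℝ) (B : Matrix (Fin n) (Fin m) ℝ)
    (d : ℕ → ℝ) : Matrix (Fin n ⊕ Fin m) (Fin (n + 1) × Fin m) ℝ :=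
  Matrix.of fun i jl =>
    (∑ q ∈ Finset.range ((n - (jl.1 : ℕ)) + 1),
      d ((n - (jl.1 : ℕ)) - q) • MarkovT A B q) i jl.2

/-- The Toeplitz matrix `T ∈ ℝ^{(L-1)×(L+n-1)}` with `T_{i,j} = d_{n-(j-i)}` for
`0 ≤ j - i ≤ n` and zero otherwise. -/
noncomputable def Tmat (d : ℕ → ℝ) (n L : ℕ) : Matrix (Fin (L - 1)) (Fin (L + n - 1)) ℝ :=
  Matrix.of fun i j =>
    if (i : ℕ) ≤ (j : ℕ) ∧ (j : ℕ) ≤ (i : ℕ) + n then d (n - ((j : ℕ) - (i : ℕ))) else 0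

/-- The block matrix `Z̃ = [[M̃, 0], [0, T ⊗ I_m]]`, with `M̃` occupying the first `m(n+1)`
columns and `T ⊗ I_m` occupying the last `m(L+n-1)` columns. -/
noncomputable def Ztil {n m : ℕ} (A : Matrix (Fin n) (Fin n) ℝ) (B : Matrix (Fin n) (Fin m) ℝ)
    (d : ℕ → ℝ) (L : ℕ) :
    Matrix ((Fin n ⊕ Fin m) ⊕ (Fin (L - 1) × Fin m)) (Fin (L + n) × Fin m) ℝ :=
  Matrix.of fun i jl =>
    match i with
    | Sum.inl i' =>
        if h : (jl.1 : ℕ) ≤ n then Mtil A B d i' (⟨(jl.1 : ℕ), by omega⟩, jl.2) else 0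
    | Sum.inr il' =>
        if h : 1 ≤ (jl.1 : ℕ) then
          Tmat d n L il'.1 ⟨(jl.1 : ℕ) - 1, by have := jl.1.isLt; omega⟩ *
            (if il'.2 = jl.2 then 1 else 0)
        else 0

/-- Reindexing of `(x_k; u_{[k,k+L-1]})`-coordinates as the coordinates of the extended-output
window `(φ_k; u_{[k+1,k+L-1]})` used in `Z̃`. -/
def embed (n m L : ℕ) : Fin n ⊕ (Fin L × Fin m) → (Fin n ⊕ Fin m) ⊕ (Fin (L - 1) × Fin m) :=
  fun i =>
    match i with
    | Sum.inl i' => Sum.inl (Sum.inl i')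
    | Sum.inr il =>
        if h : (il.1 : ℕ) = 0 then Sum.inl (Sum.inr il.2)
        else Sum.inr (⟨(il.1 : ℕ) - 1, by have := il.1.isLt; omega⟩, il.2)

/-- The matrix `[H_1(x_{[0,N-L]}); H_L(u)]` whose `k`-th column is `(x_k; u_{[k,k+L-1]})`. -/
noncomputable def Hxu {n m : ℕ} (A : Matrix (Fin n) (Fin n) ℝ) (B : Matrix (Fin n) (Fin m) ℝ)
    (x0 : Fin n → ℝ) (u : ℕ → Fin m → ℝ) (L N : ℕ) :
    Matrix (Fin n ⊕ (Fin L × Fin m)) (Fin (N - L + 1)) ℝ :=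
  Matrix.of fun i k =>
    Sum.elim (fun i' : Fin n => stateSeq A B x0 u (k : ℕ) i')
      (fun il : Fin L × Fin m => u ((k : ℕ) + (il.1 : ℕ)) il.2) i

/-!
Write `φ_k = (x_k; u_k)`. Unrolling the recursion gives
`φ_{k+j} = C̃ A^j x_k + ∑_{q ≤ j} Γ̃_{j-q} u_{k+q}`. Weighting by `d_{n-j}` and summing over
`j ≤ n`, the free response is multiplied by `∑_j d_{n-j} A^j = 0`, and collecting the coefficient
of each `u_{k+q}` yields `∑_{s ≤ n-q} d_{n-q-s} Γ̃_s = M̃_{n-q}`. The lower rows only express the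
Toeplitz structure of `T ⊗ I_m`.
-/

noncomputable section ExtendedSystem

variable {n m : ℕ} (A : Matrix (Fin n) (Fin n) ℝ) (B : Matrix (Fin n) (Fin m) ℝ)

def Ctil (n m : ℕ) : Matrix (Fin n ⊕ Fin m) (Fin n) ℝ :=
  fromRows 1 0

lemma Ctil_mulVec (v : Fin n → ℝ) : Ctil n m *ᵥ v = Sum.elim v 0 := by
  simp [Ctil, fromRows_mulVec]

def extendedOutput (x0 : Fin n → ℝ) (u : ℕ → Fin m → ℝ) (k : ℕ) : Fin n ⊕ Fin m → ℝ :=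
  Sum.elim (stateSeq A B x0 u k) (u k)

def mtilBlock (d : ℕ → ℝ) (j : ℕ) : Matrix (Fin n ⊕ Fin m) (Fin m) ℝ :=
  ∑ q ∈ range (j + 1), d (j - q) • MarkovT A B q

lemma MarkovT_zero_mulVec (v : Fin m → ℝ) :
    MarkovT A B 0 *ᵥ v = Sum.elim (0 : Fin n → ℝ) v := by
  ext (i | i) <;> simp [MarkovT, mulVec, dotProduct]

lemma MarkovT_succ_mulVec (j : ℕ) (v : Fin m → ℝ) :
    MarkovT A B (j + 1) *ᵥ v = Sum.elim ((A ^ j * B) *ᵥ v) 0 := by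
  ext (i | i) <;> simp [MarkovT, mulVec, dotProduct]

lemma stateSeq_add (x0 : Fin n → ℝ) (u : ℕ → Fin m → ℝ) (k j : ℕ) :
    stateSeq A B x0 u (k + j) =
      (A ^ j) *ᵥ stateSeq A B x0 u k + ∑ q ∈ range j, (A ^ (j - 1 - q) * B) *ᵥ u (k + q) := by
  induction j with
  | zero => simp
  | succ j ih =>
    rw [← add_assoc, stateSeq, ih, mulVec_add, mulVec_mulVec, ← pow_succ', mulVec_sum,
      sum_range_succ, Nat.add_sub_cancel, Nat.sub_self, pow_zero, Matrix.one_mul, add_assoc]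
    congr 2
    refine sum_congr rfl fun q hq => ?_
    have hq : q < j := mem_range.mp hq
    rw [mulVec_mulVec, ← Matrix.mul_assoc, ← pow_succ', show j - 1 - q + 1 = j - q by omega]

lemma extendedOutput_add (x0 : Fin n → ℝ) (u : ℕ → Fin m → ℝ) (k j : ℕ) :
    extendedOutput A B x0 u (k + j) =
      (Ctil n m * A ^ j) *ᵥ stateSeq A B x0 u k +
        ∑ q ∈ range (j + 1), MarkovT A B (j - q) *ᵥ u (k + q) := by
  have hpast : ∀ q ∈ range j, MarkovT A B (j - q) *ᵥ u (k + q) =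
      Sum.elim ((A ^ (j - 1 - q) * B) *ᵥ u (k + q)) 0 := by
    intro q hq
    rw [show j - q = j - 1 - q + 1 by simp at hq; omega, MarkovT_succ_mulVec]
  rw [sum_range_succ, sum_congr rfl hpast, Nat.sub_self, MarkovT_zero_mulVec]
  ext (i | i) <;>
    simp [extendedOutput, stateSeq_add, ← mulVec_mulVec, Ctil_mulVec, Finset.sum_apply]

lemma sum_reflect_smul_pow_eq_zero (d : ℕ → ℝ)
    (hCayley : ∑ j ∈ range (n + 1), d j • A ^ (n - j) = 0) :
    ∑ j ∈ range (n + 1), d (n - j) • A ^ j = 0 := by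
  rw [← hCayley, ← sum_range_reflect]
  refine sum_congr rfl fun j hj => ?_
  have hj : j < n + 1 := mem_range.mp hj
  rw [show n + 1 - 1 - j = n - j by omega, show n - (n - j) = j by omega]

lemma sum_smul_extendedOutput (d : ℕ → ℝ)
    (hCayley : ∑ j ∈ range (n + 1), d j • A ^ (n - j) = 0)
    (x0 : Fin n → ℝ) (u : ℕ → Fin m → ℝ) (k : ℕ) :
    ∑ j ∈ range (n + 1), d (n - j) • extendedOutput A B x0 u (k + j) =
      ∑ q ∈ range (n + 1), mtilBlock A B d (n - q) *ᵥ u (k + q) := by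
  have hfree :
      ∑ j ∈ range (n + 1), d (n - j) • (Ctil n m * A ^ j) *ᵥ stateSeq A B x0 u k = 0 := by
    simp_rw [← smul_mulVec, ← sum_mulVec, ← Matrix.mul_smul, ← Matrix.mul_sum,
      sum_reflect_smul_pow_eq_zero A d hCayley, Matrix.mul_zero, zero_mulVec]
  simp_rw [extendedOutput_add, smul_add, sum_add_distrib, hfree, zero_add, smul_sum]
  rw [sum_comm' (t' := range (n + 1)) (s' := fun q => Ico q (n + 1))
    (fun j q => by simp only [mem_range, mem_Ico]; omega)]
  refine sum_congr rfl fun q hq => ?_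
  have hq : q < n + 1 := mem_range.mp hq
  rw [sum_Ico_eq_sum_range, mtilBlock, sum_mulVec, show n + 1 - q = n - q + 1 by omega]
  refine sum_congr rfl fun s hs => ?_
  rw [smul_mulVec, show n - (q + s) = n - q - s by omega, Nat.add_sub_cancel_left]

end ExtendedSystem

lemma sum_fin_eq_sum_range_of_support {M : Type*} [AddCommMonoid M] {N a n : ℕ}
    (h : a + n < N) (f : ℕ → M) (hf : ∀ t, t < a ∨ a + n < t → f t = 0) :
    ∑ t : Fin N, f t = ∑ j ∈ range (n + 1), f (a + j) := by
  rw [Fin.sum_univ_eq_sum_range, ← sum_subset (s₁ := Ico a (a + n + 1))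
    (fun t ht => by simp only [mem_Ico, mem_range] at ht ⊢; omega)
    (fun t _ ht => hf t (by simp only [mem_Ico] at ht; omega)),
    sum_Ico_eq_sum_range, show a + n + 1 - a = n + 1 by omega]

section Ztil

variable {n m : ℕ} (A : Matrix (Fin n) (Fin n) ℝ) (B : Matrix (Fin n) (Fin m) ℝ) (d : ℕ → ℝ)
  (L : ℕ)

lemma Ztil_inl_apply (r : Fin n ⊕ Fin m) (j : Fin (L + n)) (l : Fin m) :
    Ztil A B d L (Sum.inl r) (j, l) = if (j : ℕ) ≤ n then mtilBlock A B d (n - j) r l else 0 := by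
  simp only [Ztil, Mtil, mtilBlock, of_apply]
  split_ifs <;> rfl

lemma Ztil_inr_apply (i : Fin (L - 1)) (l₀ : Fin m) (j : Fin (L + n)) (l : Fin m) :
    Ztil A B d L (Sum.inr (i, l₀)) (j, l) =
      if (i : ℕ) + 1 ≤ j ∧ (j : ℕ) ≤ i + 1 + n then
        d (n - (j - (i + 1))) * (if l₀ = l then 1 else 0) else 0 := by
  simp only [Ztil, Tmat, of_apply]
  split_ifs <;>
    first
    | (exfalso; omega)
    | rw [show (j : ℕ) - 1 - i = j - (i + 1) by omega]
    | simp_all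

lemma Ztil_mulVec_inl (hL : 1 ≤ L) (w : ℕ → Fin m → ℝ) (r : Fin n ⊕ Fin m) :
    (Ztil A B d L *ᵥ fun jl => w jl.1 jl.2) (Sum.inl r) =
      (∑ q ∈ range (n + 1), mtilBlock A B d (n - q) *ᵥ w q) r := by
  simp only [mulVec, dotProduct, Fintype.sum_prod_type, Ztil_inl_apply, Finset.sum_apply]
  rw [sum_fin_eq_sum_range_of_support (a := 0) (n := n) (by omega)
    (fun t => ∑ l, (if t ≤ n then mtilBlock A B d (n - t) r l else 0) * w t l)
    (fun t ht => by simp [show ¬ t ≤ n by omega])]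
  simp_rw [zero_add]
  refine sum_congr rfl fun q hq => ?_
  simp only [if_pos (show q ≤ n by simp at hq; omega)]

lemma Ztil_mulVec_inr (w : ℕ → Fin m → ℝ) (i : Fin (L - 1)) (l₀ : Fin m) :
    (Ztil A B d L *ᵥ fun jl => w jl.1 jl.2) (Sum.inr (i, l₀)) =
      ∑ j ∈ range (n + 1), d (n - j) * w (i + 1 + j) l₀ := by
  simp only [mulVec, dotProduct, Fintype.sum_prod_type, Ztil_inr_apply]
  rw [sum_fin_eq_sum_range_of_support (a := i + 1) (n := n) (by omega)
    (fun t => ∑ l, (if (i : ℕ) + 1 ≤ t ∧ t ≤ i + 1 + n then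
      d (n - (t - (i + 1))) * (if l₀ = l then 1 else 0) else 0) * w t l)
    (fun t ht => by
      simp only [if_neg (show ¬ ((i : ℕ) + 1 ≤ t ∧ t ≤ i + 1 + n) by omega), zero_mul,
        sum_const_zero])]
  refine sum_congr rfl fun j hj => ?_
  have hj : j < n + 1 := mem_range.mp hj
  simp [show j ≤ n by omega]

end Ztil

theorem stmt_16 {n m : ℕ}
    (A : Matrix (Fin n) (Fin n) ℝ) (B : Matrix (Fin n) (Fin m) ℝ)
    (d : ℕ → ℝ)
    (hCayley : ∑ j ∈ Finset.range (n + 1), d j • A ^ (n - j) = 0)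
    (L : ℕ) (hL : 1 ≤ L)
    (u : ℕ → Fin m → ℝ) (x0 : Fin n → ℝ)
    (k : ℕ) :
    (Matrix.of fun (i : (Fin n ⊕ Fin m) ⊕ (Fin (L - 1) × Fin m)) (j : Fin (n + 1)) =>
        match i with
        | Sum.inl (Sum.inl i') => stateSeq A B x0 u (k - n + (j : ℕ)) i'
        | Sum.inl (Sum.inr l) => u (k - n + (j : ℕ)) l
        | Sum.inr il => u (k - n + 1 + (il.1 : ℕ) + (j : ℕ)) il.2).mulVec
      (fun j : Fin (n + 1) => d (n - (j : ℕ))) =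
      (Ztil A B d L).mulVec
        (fun il : Fin (L + n) × Fin m => u (k - n + (il.1 : ℕ)) il.2) := by
  funext r
  rcases r with r | ⟨i, l⟩
  · rw [Ztil_mulVec_inl A B d L hL (fun t => u (k - n + t)),
      ← sum_smul_extendedOutput A B d hCayley x0, Finset.sum_apply,
      ← Fin.sum_univ_eq_sum_range (fun j => (d (n - j) • extendedOutput A B x0 u (k - n + j)) r)]
    simp only [mulVec, dotProduct, of_apply]
    refine sum_congr rfl fun j _ => ?_
    rcases r with i | l <;> simp [extendedOutput, mul_comm]
  · rw [Ztil_mulVec_inr A B d L (fun t => u (k - n + t)),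
      ← Fin.sum_univ_eq_sum_range (fun j => d (n - j) * u (k - n + (i + 1 + j)) l)]
    simp only [mulVec, dotProduct, of_apply]
    refine sum_congr rfl fun j _ => ?_
    rw [mul_comm, show k - n + 1 + (i : ℕ) + j = k - n + (i + 1 + j) by omega]
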